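/- arXiv:math/0701266 — 4 statements merged into one kernel-verified Lean document; each statement's English description precedes it below -/
import Mathlib

section
/- Let G ⊂ GL(V) be an irreducible complex reflection group with the ℚ-form V = V_0 ⊗_ℚ K″ over which fundamental invariants f_1, …, f_r can be chosen in S(V_0^*). Let V^reg be the complement in V of the reflecting hyperplanes of G, and let Δ = ∏_H l_H^{e_H} be the discriminant, where H runs over the reflecting hyperplanes, l_H is a linear form with kernel H, and e_H is the order of the pointwise stabilizer of H in G. Then some nonzero scalar multiple λ^{−1}Δ (λ ∈ K″^×) lies in S(V_0^*); consequently the varieties V^reg and V^reg/G, as well as the quotient morphism V^reg → V^reg/G, are defined over ℚ (V^reg/G being the localization of Spec ℚ[f_1,…,f_r] at the image of Δ). -/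
open Module LinearMap

section Defs

variable {𝕜 V : Type*} [Field 𝕜] [AddCommGroup V] [Module 𝕜 V]

/-- A (pseudo)reflection: a nontrivial finite-order linear automorphism
whose fixed subspace is a hyperplane. -/
def IsPseudoReflection (g : V ≃ₗ[𝕜] V) : Prop :=
  IsOfFinOrder g ∧ g ≠ 1 ∧
    Module.finrank 𝕜 (LinearMap.ker ((g : V →ₗ[𝕜] V) - LinearMap.id)) + 1 = Module.finrank 𝕜 V

/-- The set of reflections of a linear group. -/
def reflectionsOf (G : Subgroup (V ≃ₗ[𝕜] V)) : Set (V ≃ₗ[𝕜] V) :=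
  {g | g ∈ G ∧ IsPseudoReflection g}

/-- A reflection group: a finite linear group generated by its reflections. -/
def IsReflectionGroup (G : Subgroup (V ≃ₗ[𝕜] V)) : Prop :=
  Finite G ∧ Subgroup.closure (reflectionsOf G) = G

/-- The group `G` acts irreducibly on `V`. -/
def ActsIrreducibly (G : Subgroup (V ≃ₗ[𝕜] V)) : Prop :=
  Nontrivial V ∧
    ∀ W : Submodule 𝕜 V, (∀ g ∈ G, W.map ((g : V ≃ₗ[𝕜] V) : V →ₗ[𝕜] V) ≤ W) → W = ⊥ ∨ W = ⊤

/-- A central automorphism: `α g ∈ g · Z(H)` for every `g`. -/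
def IsCentralAut {H : Type*} [Group H] (α : MulAut H) : Prop :=
  ∀ g : H, g⁻¹ * α g ∈ Subgroup.center H

/-- An automorphism of `G` preserving the set of reflections of `G`. -/
def PreservesReflections (G : Subgroup (V ≃ₗ[𝕜] V)) (α : MulAut ↥G) : Prop :=
  ∀ g : ↥G, IsPseudoReflection ((g : V ≃ₗ[𝕜] V)) ↔ IsPseudoReflection ((α g : V ≃ₗ[𝕜] V))

end Defs

/-!
For `σ ∈ Gal(K″/ℚ)` let `T_σ` be the `σ`-semilinear automorphism of `V` acting by `σ` on
`b`-coordinates. Stability of `G` says `T_σ G T_σ⁻¹ = G`, so `H ↦ T_σ H` permutes the reflecting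
hyperplanes and preserves the orders `e_H`, while `σ ∘ l_H ∘ T_σ⁻¹` has kernel `T_σ H` and is
therefore a multiple of `l_{T_σ H}`. Hence `σ(Δ) = c_σ Δ`. Since `Δ ≠ 0`, `σ ↦ c_σ` is a
1-cocycle of `Gal(K″/ℚ)` in `K″ˣ`; by Hilbert 90 it is `σ ↦ σ(λ)/λ`, so `λ⁻¹Δ` is fixed by the
Galois group and has rational coefficients.
-/

theorem LinearMap.exists_eq_smul_of_ker_le {K V : Type*} [Field K] [AddCommGroup V] [Module K V]
    {f g : V →ₗ[K] K} (h : ker f ≤ ker g) : ∃ c : K, g = c • f := by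
  have hg : g ∈ Submodule.span K (Set.range fun _ : Unit => f) :=
    mem_span_of_iInf_ker_le_ker (by simpa using h)
  rw [Set.range_const, Submodule.mem_span_singleton] at hg
  obtain ⟨c, hc⟩ := hg
  exact ⟨c, hc.symm⟩

section Reflection

variable {K V : Type*} [Field K] [AddCommGroup V] [Module K V]

theorem IsPseudoReflection.ker_sub_id_ne_top {g : V ≃ₗ[K] V} (hg : IsPseudoReflection g) :
    ker ((g : V →ₗ[K] V) - LinearMap.id) ≠ ⊤ := by
  intro htop
  have := hg.2.2
  rw [htop, finrank_top] at this
  omega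

def reflectingHyperplanes (G : Subgroup (V ≃ₗ[K] V)) : Set (Submodule K V) :=
  {H | ∃ g ∈ G, IsPseudoReflection g ∧ ker ((g : V →ₗ[K] V) - LinearMap.id) = H}

theorem ne_top_of_mem_reflectingHyperplanes {G : Subgroup (V ≃ₗ[K] V)} {H : Submodule K V}
    (hH : H ∈ reflectingHyperplanes G) : H ≠ ⊤ := by
  obtain ⟨g, -, hg, rfl⟩ := hH
  exact hg.ker_sub_id_ne_top

end Reflection

open MvPolynomial

namespace Module.Basis

section Twist

variable {R M ι : Type*} [CommRing R] [AddCommGroup M] [Module R M]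
  (b : Basis ι R M) (σ : R →+* R) {σ' : R →+* R} [RingHomInvPair σ σ'] [RingHomInvPair σ' σ]

/-- The Galois action on `M = M₀ ⊗ R` for the form `M₀` spanned by `b`: `σ` on coordinates. -/
noncomputable def twist : M ≃ₛₗ[σ] M where
  toFun v := b.repr.symm ((b.repr v).mapRange σ σ.map_zero)
  invFun v := b.repr.symm ((b.repr v).mapRange σ' σ'.map_zero)
  map_add' u v := by simp [Finsupp.mapRange_add (map_add σ)]
  map_smul' c v := by
    simp [Finsupp.mapRange_smul' c (σ c) (b.repr v) (map_mul σ c)]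
  left_inv v := b.repr.injective <| by ext; simp
  right_inv v := b.repr.injective <| by ext; simp

@[simp]
theorem repr_twist (v : M) : b.repr (b.twist σ v) = (b.repr v).mapRange σ σ.map_zero := by
  simp [twist]

theorem twist_symm : (b.twist σ).symm = b.twist σ' := rfl

@[simp]
theorem twist_apply_self (i : ι) : b.twist σ (b i) = b i :=
  b.repr.injective (by simp)

noncomputable def twistConj : (M ≃ₗ[R] M) ≃* (M ≃ₗ[R] M) where
  toFun g := (b.twist σ).symm.trans (g.trans (b.twist σ))
  invFun g := (b.twist σ).trans (g.trans (b.twist σ).symm)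
  left_inv g := by ext; simp
  right_inv g := by ext; simp
  map_mul' g h := by ext; simp

theorem twistConj_apply (g : M ≃ₗ[R] M) (v : M) :
    b.twistConj σ g v = b.twist σ (g ((b.twist σ).symm v)) := rfl

theorem twistConj_twistConj (g : M ≃ₗ[R] M) : b.twistConj σ' (b.twistConj σ g) = g := by
  ext v
  change (b.twist σ).symm (b.twist σ (g ((b.twist σ).symm (b.twist σ v)))) = g v
  simp

theorem twistConj_mem_iff {G : Subgroup (M ≃ₗ[R] M)} (hσ : ∀ g ∈ G, b.twistConj σ g ∈ G)
    (hσ' : ∀ g ∈ G, b.twistConj σ' g ∈ G) (g : M ≃ₗ[R] M) : b.twistConj σ g ∈ G ↔ g ∈ G :=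
  ⟨fun h => b.twistConj_twistConj σ g ▸ hσ' _ h, hσ g⟩

theorem toMatrix_twistConj [Fintype ι] [DecidableEq ι] (g : M ≃ₗ[R] M) (i j : ι) :
    LinearMap.toMatrix b b (b.twistConj σ g).toLinearMap i j =
      σ (LinearMap.toMatrix b b g.toLinearMap i j) := by
  rw [LinearMap.toMatrix_apply, LinearMap.toMatrix_apply]
  simp [twistConj_apply, twist_symm]

theorem ker_twistConj_sub_id (g : M ≃ₗ[R] M) :
    ker ((b.twistConj σ g : M →ₗ[R] M) - LinearMap.id) =
      (ker ((g : M →ₗ[R] M) - LinearMap.id)).map (b.twist σ : M →ₛₗ[σ] M) := by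
  ext v
  simp [Submodule.mem_map_equiv, sub_eq_zero, twistConj_apply, ← (b.twist σ).eq_symm_apply]

theorem finrank_map_twist (W : Submodule R M) :
    finrank R (W.map (b.twist σ : M →ₛₗ[σ] M)) = finrank R W := by
  have := rank_eq_of_equiv_equiv σ ((b.twist σ).submoduleMap W).toAddEquiv
    ⟨(RingHomInvPair.toRingEquiv σ σ').injective, fun x => ⟨σ' x, RingHomInvPair.comp_apply_eq₂⟩⟩
    (fun c v => ((b.twist σ).submoduleMap W).map_smulₛₗ c v)
  simp [finrank, this]

noncomputable def twistForm (f : M →ₗ[R] R) : M →ₗ[R] R where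
  toFun v := σ (f ((b.twist σ).symm v))
  map_add' u v := by simp
  map_smul' c v := by
    rw [map_smulₛₗ, map_smul, smul_eq_mul, map_mul, RingHomInvPair.comp_apply_eq₂, smul_eq_mul,
      RingHom.id_apply]

@[simp]
theorem twistForm_apply_self (f : M →ₗ[R] R) (i : ι) : b.twistForm σ f (b i) = σ (f (b i)) := by
  simp [twistForm, twist_symm]

theorem ker_twistForm (f : M →ₗ[R] R) :
    ker (b.twistForm σ f) = (ker f).map (b.twist σ : M →ₛₗ[σ] M) := by
  ext v
  simp [Submodule.mem_map_equiv, twistForm,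
    map_eq_zero_iff σ (RingHomInvPair.toRingEquiv σ σ').injective]

theorem twistConj_eq_of_toMatrix [Fintype ι] [DecidableEq ι] {g g' : M ≃ₗ[R] M}
    (h : ∀ i j, LinearMap.toMatrix b b g'.toLinearMap i j =
      σ (LinearMap.toMatrix b b g.toLinearMap i j)) :
    g' = b.twistConj σ g :=
  LinearEquiv.toLinearMap_injective <| (LinearMap.toMatrix b b).injective <|
    Matrix.ext fun i j => by rw [h, toMatrix_twistConj]

end Twist

section Reflection

variable {K V ι : Type*} [Field K] [AddCommGroup V] [Module K V] (b : Basis ι K V)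
  (σ : K →+* K) {σ' : K →+* K} [RingHomInvPair σ σ'] [RingHomInvPair σ' σ]

theorem isPseudoReflection_twistConj {g : V ≃ₗ[K] V} (hg : IsPseudoReflection g) :
    IsPseudoReflection (b.twistConj σ g) :=
  ⟨(b.twistConj σ).toMonoidHom.isOfFinOrder hg.1, (b.twistConj σ).map_ne_one_iff.2 hg.2.1, by
    rw [ker_twistConj_sub_id, finrank_map_twist]
    exact hg.2.2⟩

theorem map_twist_mem_reflectingHyperplanes {G : Subgroup (V ≃ₗ[K] V)}
    (hG : ∀ g ∈ G, b.twistConj σ g ∈ G) {H : Submodule K V} (hH : H ∈ reflectingHyperplanes G) :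
    H.map (b.twist σ : V →ₛₗ[σ] V) ∈ reflectingHyperplanes G := by
  obtain ⟨g, hgG, hg, rfl⟩ := hH
  exact ⟨_, hG g hgG, b.isPseudoReflection_twistConj σ hg, b.ker_twistConj_sub_id σ g⟩

theorem card_fixing_map_twist {G : Subgroup (V ≃ₗ[K] V)} (hG : ∀ g, b.twistConj σ g ∈ G ↔ g ∈ G)
    (H : Submodule K V) :
    Nat.card {x : G // ∀ v ∈ H.map (b.twist σ : V →ₛₗ[σ] V), (x : V ≃ₗ[K] V) v = v} =
      Nat.card {x : G // ∀ v ∈ H, (x : V ≃ₗ[K] V) v = v} := by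
  refine (Nat.card_congr <| ((b.twistConj σ).toEquiv.subtypeEquiv fun g => (hG g).symm).subtypeEquiv
    fun x => ?_).symm
  simp only [Equiv.subtypeEquiv_apply, MulEquiv.toEquiv_eq_coe, MulEquiv.coe_toEquiv,
    Submodule.mem_map_equiv, twistConj_apply, ← (b.twist σ).eq_symm_apply]
  exact (b.twist σ).symm.toEquiv.forall_congr_right.symm

end Reflection

section LinearFormPoly

variable {R M ι : Type*} [CommRing R] [AddCommGroup M] [Module R M] [Fintype ι]
  (b : Basis ι R M)

noncomputable def linearFormPoly (f : M →ₗ[R] R) : MvPolynomial ι R :=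
  ∑ i, C (f (b i)) * X i

theorem linearFormPoly_smul (c : R) (f : M →ₗ[R] R) :
    b.linearFormPoly (c • f) = C c * b.linearFormPoly f := by
  simp [linearFormPoly, Finset.mul_sum, mul_assoc]

theorem linearFormPoly_ne_zero [Nontrivial R] {f : M →ₗ[R] R} (hf : f ≠ 0) :
    b.linearFormPoly f ≠ 0 := by
  contrapose! hf
  refine b.ext fun i => ?_
  rw [LinearMap.zero_apply]
  refine Fintype.linearIndependent_iff.mp (linearIndependent_X ι R) (fun i => f (b i)) ?_ i
  simpa [linearFormPoly, smul_eq_C_mul] using hf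

theorem map_linearFormPoly (σ : R →+* R) {σ' : R →+* R} [RingHomInvPair σ σ']
    [RingHomInvPair σ' σ] (f : M →ₗ[R] R) :
    map σ (b.linearFormPoly f) = b.linearFormPoly (b.twistForm σ f) := by
  simp [linearFormPoly]

end LinearFormPoly

section Discriminant

variable {K V ι : Type*} [Field K] [AddCommGroup V] [Module K V] [Fintype ι]
  (b : Basis ι K V) {G : Subgroup (V ≃ₗ[K] V)} {𝓗 : Finset (Submodule K V)}
  {l : Submodule K V → V →ₗ[K] K}

variable (G 𝓗 l) in
noncomputable def discriminant : MvPolynomial ι K :=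
  ∏ H ∈ 𝓗, b.linearFormPoly (l H) ^ Nat.card {x : G // ∀ v ∈ H, (x : V ≃ₗ[K] V) v = v}

theorem discriminant_ne_zero (h𝓗 : (𝓗 : Set (Submodule K V)) = reflectingHyperplanes G)
    (hl : ∀ H ∈ 𝓗, ker (l H) = H) : b.discriminant G 𝓗 l ≠ 0 := by
  refine Finset.prod_ne_zero_iff.2 fun H hH => pow_ne_zero _ (b.linearFormPoly_ne_zero ?_)
  rintro hlH
  refine ne_top_of_mem_reflectingHyperplanes (h𝓗 ▸ Finset.mem_coe.2 hH) ?_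
  rw [← hl H hH, hlH, ker_zero]

theorem exists_map_discriminant_eq_C_mul (σ : K →+* K) {σ' : K →+* K} [RingHomInvPair σ σ']
    [RingHomInvPair σ' σ] (hG : ∀ g, b.twistConj σ g ∈ G ↔ g ∈ G)
    (h𝓗 : (𝓗 : Set (Submodule K V)) = reflectingHyperplanes G) (hl : ∀ H ∈ 𝓗, ker (l H) = H) :
    ∃ c, map σ (b.discriminant G 𝓗 l) = C c * b.discriminant G 𝓗 l := by
  set T : Submodule K V → Submodule K V := fun H => H.map (b.twist σ : V →ₛₗ[σ] V)
  set e : Submodule K V → ℕ := fun H => Nat.card {x : G // ∀ v ∈ H, (x : V ≃ₗ[K] V) v = v}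
  have hT : ∀ H ∈ 𝓗, T H ∈ 𝓗 := by
    intro H hH
    rw [← Finset.mem_coe, h𝓗] at hH ⊢
    exact b.map_twist_mem_reflectingHyperplanes σ (fun g => (hG g).2) hH
  have hT_inj : Function.Injective T :=
    Submodule.map_injective_of_injective (b.twist σ).injective
  have hT_perm : 𝓗.image T = 𝓗 :=
    Finset.eq_of_subset_of_card_le (Finset.image_subset_iff.2 hT)
      (Finset.card_image_of_injective _ hT_inj).ge
  have hc : ∀ H ∈ 𝓗, ∃ c, b.twistForm σ (l H) = c • l (T H) := fun H hH =>
    exists_eq_smul_of_ker_le (by rw [hl _ (hT H hH), ker_twistForm, hl H hH])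
  choose! c hc using hc
  refine ⟨∏ H ∈ 𝓗, c H ^ e H, ?_⟩
  calc map σ (b.discriminant G 𝓗 l)
      = ∏ H ∈ 𝓗, C (c H ^ e H) * b.linearFormPoly (l (T H)) ^ e (T H) := by
        rw [discriminant, map_prod]
        refine Finset.prod_congr rfl fun H hH => ?_
        rw [map_pow, map_linearFormPoly, hc H hH, linearFormPoly_smul, mul_pow, map_pow]
        simp only [e, T, card_fixing_map_twist b σ hG]
    _ = C (∏ H ∈ 𝓗, c H ^ e H) * b.discriminant G 𝓗 l := by
        have hreindex := Finset.prod_image (s := 𝓗)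
          (f := fun H => b.linearFormPoly (l H) ^ e H) hT_inj.injOn
        rw [hT_perm] at hreindex
        rw [Finset.prod_mul_distrib, map_prod, discriminant, hreindex]

end Discriminant

end Module.Basis

section GaloisDescent

variable {F K ι : Type*} [Field F] [Field K] [Algebra F K] {P : MvPolynomial ι K}

theorem MvPolynomial.mem_range_map_algebraMap_of_forall_map_eq [IsGalois F K]
    (h : ∀ τ : K ≃ₐ[F] K, map (τ : K →+* K) P = P) : P ∈ Set.range (map (algebraMap F K)) := by
  rw [mem_range_map_iff_coeffs_subset]
  intro a ha
  obtain ⟨m, -, rfl⟩ := mem_coeffs_iff.1 ha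
  refine (InfiniteGalois.mem_range_algebraMap_iff_fixed _).2 fun τ => ?_
  conv_rhs => rw [← h τ]
  rw [coeff_map]
  rfl

theorem MvPolynomial.isMulCocycle₁_of_map_eq_C_mul (hP : P ≠ 0) {c : (K ≃ₐ[F] K) → Kˣ}
    (hc : ∀ τ : K ≃ₐ[F] K, map (τ : K →+* K) P = C (c τ : K) * P) :
    groupCohomology.IsMulCocycle₁ c := by
  intro τ υ
  have h := hc (τ * υ)
  rw [show ((τ * υ : K ≃ₐ[F] K) : K →+* K) = (τ : K →+* K).comp υ from rfl, ← map_map, hc υ,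
    map_mul, map_C, hc τ, ← mul_assoc, ← C_mul] at h
  ext
  simpa [AlgEquiv.smul_units_def] using (C_injective ι K (mul_right_cancel₀ hP h)).symm

theorem MvPolynomial.exists_C_mul_eq_map_of_forall_map_eq_C_mul [FiniteDimensional F K]
    [IsGalois F K] (hP : P ≠ 0) (h : ∀ τ : K ≃ₐ[F] K, ∃ c, map (τ : K →+* K) P = C c * P) :
    ∃ (lam : Kˣ) (P₀ : MvPolynomial ι F), C ((lam⁻¹ : Kˣ) : K) * P = map (algebraMap F K) P₀ := by
  choose c hc using h
  have hc0 : ∀ τ, c τ ≠ 0 := fun τ h0 =>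
    hP (map_injective _ τ.injective (by rw [hc τ, h0, C_0, zero_mul, map_zero]))
  let u : (K ≃ₐ[F] K) → Kˣ := fun τ => Units.mk0 (c τ) (hc0 τ)
  obtain ⟨lam, hlam⟩ := groupCohomology.isMulCoboundary₁_of_isMulCocycle₁_of_aut_to_units u
    (isMulCocycle₁_of_map_eq_C_mul hP hc)
  obtain ⟨P₀, hP₀⟩ := mem_range_map_algebraMap_of_forall_map_eq (F := F)
    (P := C ((lam⁻¹ : Kˣ) : K) * P) fun τ => by
      have := congrArg Units.val (hlam τ)
      simp only [AlgEquiv.smul_units_def, Units.val_div_eq_div_val, Units.coe_map] at this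
      rw [map_mul, map_C, hc τ, ← mul_assoc, ← C_mul]
      have hcτ : c τ = τ lam / lam := by simpa [u] using this.symm
      rw [hcτ, Units.val_inv_eq_inv_val, map_inv₀, RingHom.coe_coe, div_eq_mul_inv,
        inv_mul_cancel_left₀ ((map_ne_zero τ).2 lam.ne_zero)]
  exact ⟨lam, P₀, hP₀.symm⟩

end GaloisDescent

open MvPolynomial in
theorem discriminant_rational_up_to_scalar_general
    (K'' : Subfield ℂ) [IsGalois ℚ ↥K''] [FiniteDimensional ℚ ↥K'']
    {V : Type} [AddCommGroup V] [Module ↥K'' V]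
    (G : Subgroup (V ≃ₗ[↥K''] V))
    (b : Basis (Fin (Module.finrank ↥K'' V)) ↥K'' V)
    -- global stability of `G` under `Gal(K″/ℚ)` in the ℚ-form given by `b`:
    (hstable : ∀ σ : ↥K'' ≃ₐ[ℚ] ↥K'', ∀ g ∈ G, ∃ g' ∈ G,
      ∀ i j, LinearMap.toMatrix b b ((g' : V ≃ₗ[↥K''] V) : V →ₗ[↥K''] V) i j =
        σ (LinearMap.toMatrix b b ((g : V ≃ₗ[↥K''] V) : V →ₗ[↥K''] V) i j))
    -- `𝓗` is the (finite) set of reflecting hyperplanes of `G`: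
    (𝓗 : Finset (Submodule ↥K'' V))
    (h𝓗 : (𝓗 : Set (Submodule ↥K'' V)) =
      {H | ∃ g ∈ G, IsPseudoReflection g ∧
        LinearMap.ker (((g : V ≃ₗ[↥K''] V) : V →ₗ[↥K''] V) - LinearMap.id) = H})
    -- `l H` is a linear form with kernel `H`:
    (l : Submodule ↥K'' V → (V →ₗ[↥K''] ↥K''))
    (hl : ∀ H ∈ 𝓗, LinearMap.ker (l H) = H) :
    -- conclusion: a scalar multiple of the discriminant `Δ = ∏_H l_H^{e_H}` is a
    -- polynomial with rational coefficients (lies in `S(V₀^*)`):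
    ∃ (lam : (↥K'')ˣ) (Δ₀ : MvPolynomial (Fin (Module.finrank ↥K'' V)) ℚ),
      MvPolynomial.C ((lam⁻¹ : (↥K'')ˣ) : ↥K'') *
        (∏ H ∈ 𝓗,
          (∑ i, MvPolynomial.C (l H (b i)) * MvPolynomial.X i) ^
            (Nat.card {x : ↥G // ∀ v ∈ H, (x : V ≃ₗ[↥K''] V) v = v})) =
      MvPolynomial.map (algebraMap ℚ ↥K'') Δ₀ := by
  have hG : ∀ (τ : ↥K'' ≃ₐ[ℚ] ↥K'') {τ' : ↥K'' →+* ↥K''} [RingHomInvPair (τ : ↥K'' →+* ↥K'') τ']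
      [RingHomInvPair τ' τ], ∀ g ∈ G, b.twistConj (τ : ↥K'' →+* ↥K'') g ∈ G := by
    intro τ _ _ _ g hg
    obtain ⟨g', hg'G, hg'⟩ := hstable τ g hg
    rwa [b.twistConj_eq_of_toMatrix (τ : ↥K'' →+* ↥K'') (g := g) (g' := g') hg'] at hg'G
  refine exists_C_mul_eq_map_of_forall_map_eq_C_mul (b.discriminant_ne_zero h𝓗 hl) fun τ => ?_
  have : RingHomInvPair (τ : ↥K'' →+* ↥K'') (τ.symm : ↥K'' →+* ↥K'') :=
    .of_ringEquiv τ.toRingEquiv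
  have : RingHomInvPair (τ.symm : ↥K'' →+* ↥K'') (τ : ↥K'' →+* ↥K'') :=
    .of_ringEquiv_symm τ.toRingEquiv
  exact b.exists_map_discriminant_eq_C_mul _ (b.twistConj_mem_iff _ (hG τ) (hG τ.symm)) h𝓗 hl

open MvPolynomial in
/-- **Corollary 8 (Marin–Michel).** Let `G ⊂ GL(V)` be an irreducible complex reflection
group with a ℚ-form `V = V₀ ⊗_ℚ K″` (given by a basis `b`) for which `G` is globally
stable under `Gal(K″/ℚ)`.  Let `𝓗` be the set of reflecting hyperplanes, `l_H` a linear
form with kernel `H`, `e_H` the order of the pointwise stabilizer of `H` in `G`, and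
`Δ = ∏_H l_H^{e_H}` the discriminant.  Then some scalar multiple `λ⁻¹Δ` (`λ ∈ K″ˣ`) lies
in `S(V₀^*)`, i.e. is a polynomial with rational coefficients; consequently `V^reg`,
`V^reg/G` and the quotient morphism `V^reg → V^reg/G` are defined over `ℚ`. -/
theorem discriminant_rational_up_to_scalar
    (K'' : Subfield ℂ) [IsGalois ℚ ↥K''] [FiniteDimensional ℚ ↥K'']
    {V : Type} [AddCommGroup V] [Module ↥K'' V] [FiniteDimensional ↥K'' V]
    (G : Subgroup (V ≃ₗ[↥K''] V)) (hG : IsReflectionGroup G) (hirr : ActsIrreducibly G)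
    (b : Basis (Fin (Module.finrank ↥K'' V)) ↥K'' V)
    -- global stability of `G` under `Gal(K″/ℚ)` in the ℚ-form given by `b`:
    (hstable : ∀ σ : ↥K'' ≃ₐ[ℚ] ↥K'', ∀ g ∈ G, ∃ g' ∈ G,
      ∀ i j, LinearMap.toMatrix b b ((g' : V ≃ₗ[↥K''] V) : V →ₗ[↥K''] V) i j =
        σ (LinearMap.toMatrix b b ((g : V ≃ₗ[↥K''] V) : V →ₗ[↥K''] V) i j))
    -- `𝓗` is the (finite) set of reflecting hyperplanes of `G`:
    (𝓗 : Finset (Submodule ↥K'' V))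
    (h𝓗 : (𝓗 : Set (Submodule ↥K'' V)) =
      {H | ∃ g ∈ G, IsPseudoReflection g ∧
        LinearMap.ker (((g : V ≃ₗ[↥K''] V) : V →ₗ[↥K''] V) - LinearMap.id) = H})
    -- `l H` is a linear form with kernel `H`:
    (l : Submodule ↥K'' V → (V →ₗ[↥K''] ↥K''))
    (hl : ∀ H ∈ 𝓗, LinearMap.ker (l H) = H) :
    -- conclusion: a scalar multiple of the discriminant `Δ = ∏_H l_H^{e_H}` is a
    -- polynomial with rational coefficients (lies in `S(V₀^*)`):
    ∃ (lam : (↥K'')ˣ) (Δ₀ : MvPolynomial (Fin (Module.finrank ↥K'' V)) ℚ),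
      MvPolynomial.C ((lam⁻¹ : (↥K'')ˣ) : ↥K'') *
        (∏ H ∈ 𝓗,
          (∑ i, MvPolynomial.C (l H (b i)) * MvPolynomial.X i) ^
            (Nat.card {x : ↥G // ∀ v ∈ H, (x : V ≃ₗ[↥K''] V) v = v})) =
      MvPolynomial.map (algebraMap ℚ ↥K'') Δ₀ :=
  discriminant_rational_up_to_scalar_general K'' G b hstable 𝓗 h𝓗 l hl
end

section
/- Let G = G(de,e,r) and let t = Diag(ζ_{de}, 1, …, 1) ∈ G(de,1,r), which normalizes G. The automorphism Ad t^i of G (conjugation by t^i) is inner if and only if gcd(e,r) divides i; consequently the image of Ad t in Out(G) has order gcd(e,r). -/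
open Module LinearMap

/-- The set of monomial matrices constituting `G(de,e,r)` (given here by the parameters
`d`, `e`, `r`): the nonzero entries are `de`-th roots of unity and their product is a
`d`-th root of unity. -/
def monomialSet (d e r : ℕ) : Set (Matrix.GeneralLinearGroup (Fin r) ℂ) :=
  {A | ∃ σ : Equiv.Perm (Fin r),
    (∀ i j, ((A : Matrix (Fin r) (Fin r) ℂ) i j ≠ 0 ↔ i = σ j)) ∧
    (∀ j, ((A : Matrix (Fin r) (Fin r) ℂ) (σ j) j) ^ (d * e) = 1) ∧
    (∏ j, (A : Matrix (Fin r) (Fin r) ℂ) (σ j) j) ^ d = 1}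

/-- The imprimitive complex reflection group `G(de,e,r)`. -/
def Gdeer (d e r : ℕ) : Subgroup (Matrix.GeneralLinearGroup (Fin r) ℂ) :=
  Subgroup.closure (monomialSet d e r)

/-- A matrix is a (pseudo)reflection iff it fixes a hyperplane pointwise,
i.e. `rank (A - 1) = 1`. -/
def IsMatrixReflection {r : ℕ} (A : Matrix.GeneralLinearGroup (Fin r) ℂ) : Prop :=
  ((A : Matrix (Fin r) (Fin r) ℂ) - 1).rank = 1

/-- An automorphism of a matrix group preserving its set of reflections. -/
def PreservesMatrixReflections {r : ℕ} (G : Subgroup (Matrix.GeneralLinearGroup (Fin r) ℂ))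
    (α : MulAut ↥G) : Prop :=
  ∀ g : ↥G, IsMatrixReflection (g : Matrix.GeneralLinearGroup (Fin r) ℂ) ↔
    IsMatrixReflection ((α g : ↥G) : Matrix.GeneralLinearGroup (Fin r) ℂ)

/-- The diagonal matrix `t = Diag(ζ_{de}, 1, …, 1)`, a generator of `G(de,1,r)`
modulo `G(de,e,r)`. -/
noncomputable def tGL (d e r : ℕ) : Matrix.GeneralLinearGroup (Fin r) ℂ :=
  Matrix.GeneralLinearGroup.mkOfDetNeZero
    (Matrix.diagonal fun i =>
      if (i : ℕ) = 0 then Complex.exp (2 * Real.pi * Complex.I / ((d : ℂ) * e)) else 1)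
    (by
      rw [Matrix.det_diagonal]
      refine Finset.prod_ne_zero_iff.mpr fun i _ => ?_
      split
      · exact Complex.exp_ne_zero _
      · exact one_ne_zero)

/-! Elements of `G(de,e,r)` are monomial matrices, and conjugating one by a diagonal matrix with
`de`-th root of unity entries does not change the product of its nonzero entries; hence `t`
normalizes `G`. If `Ad tⁱ = Ad h` on `G`, then `x = t⁻ⁱ h` commutes with the cyclic permutation
matrix, so all nonzero entries of `x` equal one `de`-th root of unity `c`, and the product of the
entries of `h = tⁱ x` shows `(cʳ ζⁱ)ᵈ = 1`, where `ζ = ζ_{de}`. Conversely, for such a `c` the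
matrix `h = c tⁱ` lies in `G` and induces the same automorphism as `tⁱ`, since scalars are
central. Writing `c = ζᵏ`, the condition `(cʳ ζⁱ)ᵈ = 1` says `e ∣ k r + i`, which is solvable
in `k` iff `gcd(e,r) ∣ i`. -/

theorem IsPrimitiveRoot.exists_pow_mul_pow_eq_one_iff {K : Type*} [Field K] {ζ : K} {d e : ℕ}
    (hζ : IsPrimitiveRoot ζ (d * e)) (hde : d * e ≠ 0) (r i : ℕ) :
    (∃ c : K, c ^ (d * e) = 1 ∧ (c ^ r * ζ ^ i) ^ d = 1) ↔ Nat.gcd e r ∣ i := by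
  have : NeZero (d * e) := ⟨hde⟩
  constructor
  · rintro ⟨c, hc, hcd⟩
    obtain ⟨k, -, rfl⟩ := hζ.eq_pow_of_pow_eq_one hc
    rw [← pow_mul, ← pow_add, ← pow_mul, hζ.pow_eq_one_iff_dvd, mul_comm _ d,
      Nat.mul_dvd_mul_iff_left (Nat.pos_of_ne_zero (left_ne_zero_of_mul hde))] at hcd
    exact (Nat.dvd_add_right ((Nat.gcd_dvd_right e r).mul_left k)).mp
      ((Nat.gcd_dvd_left e r).trans hcd)
  · rintro ⟨q, rfl⟩
    -- Bézout: `gcd e r = e A + r B`, so `c = ζ ^ (-q B)` turns `c ^ r ζ ^ i` into `ζ ^ (q A e)`.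
    have hc : (ζ ^ (-(q * Nat.gcdB e r))) ^ r * ζ ^ (Nat.gcd e r * q)
        = ζ ^ (q * Nat.gcdA e r * e) := by
      rw [← zpow_natCast _ r, ← zpow_mul, ← zpow_natCast ζ, ← zpow_add₀ (hζ.ne_zero hde)]
      congr 1
      push_cast
      linear_combination (q : ℤ) * Nat.gcd_eq_gcd_ab e r
    refine ⟨ζ ^ (-(q * Nat.gcdB e r)), ?_, ?_⟩
    · rw [← zpow_natCast, ← zpow_mul, hζ.zpow_eq_one_iff_dvd]
      exact Dvd.intro_left _ rfl
    · rw [hc, ← zpow_natCast, ← zpow_mul, hζ.zpow_eq_one_iff_dvd]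
      exact ⟨q * Nat.gcdA e r, by push_cast; ring⟩

lemma Pi.mulSingle_apply_ne_zero {ι M : Type*} [DecidableEq ι] [MulZeroOneClass M]
    [NeZero (1 : M)] {i : ι} {x : M} (hx : x ≠ 0) (j : ι) : (Pi.mulSingle i x : ι → M) j ≠ 0 := by
  rw [Pi.mulSingle_apply]
  split_ifs
  exacts [hx, one_ne_zero]

open Matrix

section MonomialMatrix

variable {n R : Type*} [DecidableEq n]

def monomialMatrix [Zero R] (σ : Equiv.Perm n) (f : n → R) : Matrix n n R :=
  Matrix.of fun i j => if i = σ j then f j else 0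

@[simp]
lemma monomialMatrix_apply [Zero R] (σ : Equiv.Perm n) (f : n → R) (i j : n) :
    monomialMatrix σ f i j = if i = σ j then f j else 0 := rfl

lemma monomialMatrix_one_left [Zero R] (f : n → R) : monomialMatrix 1 f = diagonal f := by
  ext i j
  by_cases h : i = j <;> simp [h]

@[simp]
lemma monomialMatrix_one_one [Zero R] [One R] :
    monomialMatrix (1 : Equiv.Perm n) (fun _ => (1 : R)) = 1 := by
  rw [monomialMatrix_one_left]
  exact diagonal_one

lemma eq_of_monomialMatrix_eq [Zero R] {σ τ : Equiv.Perm n} {f g : n → R} (hf : ∀ j, f j ≠ 0)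
    (h : monomialMatrix σ f = monomialMatrix τ g) : f = g := by
  funext j
  have hj := congrFun₂ h (σ j) j
  by_cases hστ : σ j = τ j
  · simpa [hστ] using hj
  · exact absurd (by simpa [hστ] using hj) (hf j)

variable [Fintype n]

lemma monomialMatrix_mul [NonUnitalNonAssocSemiring R] (σ τ : Equiv.Perm n) (f g : n → R) :
    monomialMatrix σ f * monomialMatrix τ g = monomialMatrix (σ * τ) fun j => f (τ j) * g j := by
  ext i j
  rw [Matrix.mul_apply, Finset.sum_eq_single (τ j) (fun k _ hk => by simp [hk]) (by simp)]
  simp only [monomialMatrix_apply, ↓reduceIte, ite_mul, zero_mul, Equiv.Perm.coe_mul,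
    Function.comp_apply]
  congr

lemma monomialMatrix_mul_monomialMatrix_inv [DivisionRing R] (σ : Equiv.Perm n) {f : n → R}
    (hf : ∀ j, f j ≠ 0) :
    monomialMatrix σ f * monomialMatrix σ⁻¹ (fun j => (f (σ⁻¹ j))⁻¹) = 1 := by
  simp [monomialMatrix_mul, hf]

lemma Matrix.GeneralLinearGroup.val_inv_of_val_eq_monomialMatrix [Field R] {u : GL n R}
    {σ : Equiv.Perm n} {f : n → R} (hf : ∀ j, f j ≠ 0)
    (hu : (u : Matrix n n R) = monomialMatrix σ f) :
    ((u⁻¹ : GL n R) : Matrix n n R) = monomialMatrix σ⁻¹ (fun j => (f (σ⁻¹ j))⁻¹) := by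
  rw [coe_units_inv, hu]
  exact inv_eq_right_inv (monomialMatrix_mul_monomialMatrix_inv σ hf)

end MonomialMatrix

lemma Fin.apply_eq_apply_zero_of_comp_finRotate {α : Type*} {r : ℕ} [NeZero r] {f : Fin r → α}
    (hf : f ∘ finRotate r = f) (j : Fin r) : f j = f 0 := by
  obtain ⟨m, rfl⟩ := Nat.exists_eq_succ_of_ne_zero (NeZero.ne r)
  induction j using Fin.induction with
  | zero => rfl
  | succ j ih => rw [← Fin.coeSucc_eq_succ, ← finRotate_apply, ← ih]; exact congrFun hf _

section finRotateGL

variable {r : ℕ} {R : Type*} [Semiring R]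

variable (r R) in
def finRotateGL : GL (Fin r) R :=
  ⟨monomialMatrix (finRotate r) 1, monomialMatrix (finRotate r)⁻¹ 1,
    by simp [monomialMatrix_mul], by simp [monomialMatrix_mul]⟩

lemma val_finRotateGL :
    (finRotateGL r R : Matrix (Fin r) (Fin r) R) = monomialMatrix (finRotate r) 1 := rfl

lemma apply_eq_apply_zero_of_commute_finRotateGL [NeZero r] {x : GL (Fin r) R}
    {τ : Equiv.Perm (Fin r)} {f : Fin r → R} (hf : ∀ j, f j ≠ 0)
    (hx : (x : Matrix (Fin r) (Fin r) R) = monomialMatrix τ f)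
    (hcomm : Commute x (finRotateGL r R)) (j : Fin r) : f j = f 0 := by
  have hval := congrArg Units.val hcomm.eq
  rw [Units.val_mul, Units.val_mul, hx, val_finRotateGL, monomialMatrix_mul,
    monomialMatrix_mul] at hval
  have hrot := eq_of_monomialMatrix_eq (fun j => by simpa using hf _) hval
  simp only [mul_one, one_mul, Pi.one_apply] at hrot
  exact Fin.apply_eq_apply_zero_of_comp_finRotate hrot j

end finRotateGL

section monomialSet

variable {d e r : ℕ}

lemma mem_monomialSet_iff_of_val_eq {A : GL (Fin r) ℂ} {σ : Equiv.Perm (Fin r)} {f : Fin r → ℂ}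
    (hf : ∀ j, f j ≠ 0) (hA : (A : Matrix (Fin r) (Fin r) ℂ) = monomialMatrix σ f) :
    A ∈ monomialSet d e r ↔ (∀ j, f j ^ (d * e) = 1) ∧ (∏ j, f j) ^ d = 1 := by
  have hdiag : ∀ j, (A : Matrix (Fin r) (Fin r) ℂ) (σ j) j = f j := by simp [hA]
  constructor
  · rintro ⟨τ, hτ, hpow, hprod⟩
    have hστ : ∀ j, τ j = σ j := fun j => ((hτ _ _).1 (by rw [hdiag]; exact hf j)).symm
    simp only [hστ, hdiag] at hpow hprod
    exact ⟨hpow, hprod⟩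
  · rintro ⟨hpow, hprod⟩
    refine ⟨σ, fun i j => ?_, by simpa [hdiag] using hpow, by simpa [hdiag] using hprod⟩
    by_cases h : i = σ j <;> simp [hA, h, hf]

lemma mem_monomialSet_iff {A : GL (Fin r) ℂ} :
    A ∈ monomialSet d e r ↔ ∃ (σ : Equiv.Perm (Fin r)) (f : Fin r → ℂ), (∀ j, f j ≠ 0) ∧
      (A : Matrix (Fin r) (Fin r) ℂ) = monomialMatrix σ f ∧
      (∀ j, f j ^ (d * e) = 1) ∧ (∏ j, f j) ^ d = 1 := by
  refine ⟨fun hA => ?_,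
    fun ⟨σ, f, hf, hAf, hcond⟩ => (mem_monomialSet_iff_of_val_eq hf hAf).2 hcond⟩
  obtain ⟨σ, hσ, -⟩ := id hA
  have hf : ∀ j, (A : Matrix (Fin r) (Fin r) ℂ) (σ j) j ≠ 0 := fun j => (hσ _ _).2 rfl
  have hAf : (A : Matrix (Fin r) (Fin r) ℂ) = monomialMatrix σ fun j => A (σ j) j := by
    ext i j
    by_cases h : i = σ j
    · simp [h]
    · simpa [h] using mt (hσ i j).1 h
  exact ⟨σ, _, hf, hAf, (mem_monomialSet_iff_of_val_eq hf hAf).1 hA⟩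

end monomialSet

def monomialSubgroup (d e r : ℕ) : Subgroup (GL (Fin r) ℂ) where
  carrier := monomialSet d e r
  one_mem' := (mem_monomialSet_iff_of_val_eq (σ := 1) (f := fun _ => 1) (fun _ => one_ne_zero)
    monomialMatrix_one_one.symm).2 ⟨by simp, by simp⟩
  mul_mem' := by
    intro A B hA hB
    obtain ⟨σ, f, hf, hA, hfpow, hfprod⟩ := mem_monomialSet_iff.1 hA
    obtain ⟨τ, g, hg, hB, hgpow, hgprod⟩ := mem_monomialSet_iff.1 hB
    rw [mem_monomialSet_iff_of_val_eq (fun j => mul_ne_zero (hf (τ j)) (hg j))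
      (by rw [Units.val_mul, hA, hB, monomialMatrix_mul])]
    refine ⟨fun j => by rw [mul_pow, hfpow, hgpow, one_mul], ?_⟩
    rw [Finset.prod_mul_distrib, Equiv.prod_comp τ f, mul_pow, hfprod, hgprod, one_mul]
  inv_mem' := by
    intro A hA
    obtain ⟨σ, f, hf, hA, hfpow, hfprod⟩ := mem_monomialSet_iff.1 hA
    rw [mem_monomialSet_iff_of_val_eq (fun j => inv_ne_zero (hf _))
      (GeneralLinearGroup.val_inv_of_val_eq_monomialMatrix hf hA)]
    refine ⟨fun j => by rw [inv_pow, hfpow, inv_one], ?_⟩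
    rw [Equiv.prod_comp σ⁻¹ fun j => (f j)⁻¹, Finset.prod_inv_distrib, inv_pow, hfprod, inv_one]

section Gdeer

variable {d e r : ℕ}

lemma Gdeer_eq_monomialSubgroup : Gdeer d e r = monomialSubgroup d e r :=
  Subgroup.closure_eq (monomialSubgroup d e r)

lemma mem_Gdeer_iff_of_val_eq {A : GL (Fin r) ℂ} {σ : Equiv.Perm (Fin r)} {f : Fin r → ℂ}
    (hf : ∀ j, f j ≠ 0) (hA : (A : Matrix (Fin r) (Fin r) ℂ) = monomialMatrix σ f) :
    A ∈ Gdeer d e r ↔ (∀ j, f j ^ (d * e) = 1) ∧ (∏ j, f j) ^ d = 1 := by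
  rw [Gdeer_eq_monomialSubgroup]
  exact mem_monomialSet_iff_of_val_eq hf hA

lemma mem_Gdeer_iff {A : GL (Fin r) ℂ} :
    A ∈ Gdeer d e r ↔ ∃ (σ : Equiv.Perm (Fin r)) (f : Fin r → ℂ), (∀ j, f j ≠ 0) ∧
      (A : Matrix (Fin r) (Fin r) ℂ) = monomialMatrix σ f ∧
      (∀ j, f j ^ (d * e) = 1) ∧ (∏ j, f j) ^ d = 1 := by
  rw [Gdeer_eq_monomialSubgroup]
  exact mem_monomialSet_iff

lemma Gdeer_le_Gdeer_one : Gdeer d e r ≤ Gdeer (d * e) 1 r := by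
  intro A hA
  obtain ⟨σ, f, hf, hAf, hpow, -⟩ := mem_Gdeer_iff.1 hA
  refine (mem_Gdeer_iff_of_val_eq hf hAf).2 ⟨by simpa using hpow, ?_⟩
  rw [← Finset.prod_pow]
  simp [hpow]

lemma mul_mul_inv_mem_Gdeer {u g : GL (Fin r) ℂ} (hu : u ∈ Gdeer (d * e) 1 r)
    (hg : g ∈ Gdeer d e r) : u * g * u⁻¹ ∈ Gdeer d e r := by
  obtain ⟨τ, w, hw, hu, hwpow, -⟩ := mem_Gdeer_iff.1 hu
  obtain ⟨σ, f, hf, hg, hfpow, hfprod⟩ := mem_Gdeer_iff.1 hg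
  rw [mul_one] at hwpow
  have hconj := congrArg₂ (· * ·) (congrArg₂ (· * ·) hu hg)
    (GeneralLinearGroup.val_inv_of_val_eq_monomialMatrix hw hu)
  simp only [monomialMatrix_mul, ← Units.val_mul] at hconj
  rw [mem_Gdeer_iff_of_val_eq _ hconj]
  · refine ⟨fun j => by simp [mul_pow, inv_pow, hwpow, hfpow], ?_⟩
    rw [Equiv.prod_comp τ⁻¹ fun j => w (σ j) * f j * (w j)⁻¹, Finset.prod_mul_distrib,
      Finset.prod_mul_distrib, Equiv.prod_comp σ w, Finset.prod_inv_distrib,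
      mul_right_comm, mul_inv_cancel₀ (Finset.prod_ne_zero_iff.2 fun j _ => hw j), one_mul, hfprod]
  · exact fun j => mul_ne_zero (mul_ne_zero (hw _) (hf _)) (inv_ne_zero (hw _))

lemma Gdeer_one_le_normalizer :
    Gdeer (d * e) 1 r ≤ Subgroup.normalizer (Gdeer d e r : Set (GL (Fin r) ℂ)) := by
  intro u hu
  refine Subgroup.mem_normalizer_iff.2 fun g => ⟨mul_mul_inv_mem_Gdeer hu, fun hg => ?_⟩
  simpa [mul_assoc] using mul_mul_inv_mem_Gdeer (inv_mem hu) hg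

end Gdeer

section tGL

variable {d e r : ℕ}

local notation "ζ" => Complex.exp (2 * Real.pi * Complex.I / ((d : ℂ) * e))

lemma Complex.isPrimitiveRoot_exp_two_pi_I_div_mul (hde : d * e ≠ 0) :
    IsPrimitiveRoot ζ (d * e) := by
  simpa using Complex.isPrimitiveRoot_exp (d * e) hde

lemma val_tGL_pow [NeZero r] (i : ℕ) :
    ((tGL d e r ^ i : GL (Fin r) ℂ) : Matrix (Fin r) (Fin r) ℂ) =
      monomialMatrix 1 (Pi.mulSingle 0 (ζ ^ i)) := by
  rw [Units.val_pow_eq_pow_val, tGL, GeneralLinearGroup.val_mkOfDetNeZero, diagonal_pow,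
    monomialMatrix_one_left]
  congr 1
  funext j
  by_cases hj : j = 0 <;> simp [Fin.val_eq_zero_iff, hj]

lemma tGL_mem_Gdeer_one [NeZero r] (hde : d * e ≠ 0) : tGL d e r ∈ Gdeer (d * e) 1 r := by
  have hζ := Complex.isPrimitiveRoot_exp_two_pi_I_div_mul hde
  have ht := val_tGL_pow (d := d) (e := e) (r := r) 1
  rw [pow_one, pow_one] at ht
  rw [mem_Gdeer_iff_of_val_eq (Pi.mulSingle_apply_ne_zero (hζ.ne_zero hde)) ht, mul_one]
  refine ⟨fun j => ?_, ?_⟩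
  · rw [Pi.mulSingle_apply]
    split_ifs
    exacts [hζ.pow_eq_one, one_pow _]
  · simpa [Finset.prod_pi_mulSingle'] using hζ.pow_eq_one

lemma ad_tGL_pow_inner_of_root [NeZero r] (hde : d * e ≠ 0) {i : ℕ} {c : ℂ}
    (hc : c ^ (d * e) = 1) (hcd : (c ^ r * ζ ^ i) ^ d = 1) :
    ∃ h ∈ Gdeer d e r, ∀ g, tGL d e r ^ i * g * (tGL d e r ^ i)⁻¹ = h * g * h⁻¹ := by
  have hζ := Complex.isPrimitiveRoot_exp_two_pi_I_div_mul hde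
  have hc0 : c ≠ 0 := by rintro rfl; simp [zero_pow hde] at hc
  set s := GeneralLinearGroup.scalar (Fin r) (Units.mk0 c hc0)
  refine ⟨s * tGL d e r ^ i, ?_, fun g => ?_⟩
  · have hval : ((s * tGL d e r ^ i : GL (Fin r) ℂ) : Matrix (Fin r) (Fin r) ℂ) =
        monomialMatrix 1 fun j => c * (Pi.mulSingle 0 (ζ ^ i) : Fin r → ℂ) j := by
      rw [Units.val_mul, val_tGL_pow, monomialMatrix_one_left, monomialMatrix_one_left]
      ext j k
      by_cases hjk : j = k <;> simp [s, hjk]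
    rw [mem_Gdeer_iff_of_val_eq (fun j => mul_ne_zero hc0
      (Pi.mulSingle_apply_ne_zero (pow_ne_zero _ (hζ.ne_zero hde)) j)) hval]
    refine ⟨fun j => ?_, ?_⟩
    · rw [mul_pow, hc, one_mul, Pi.mulSingle_apply]
      split_ifs
      exacts [by rw [pow_right_comm, hζ.pow_eq_one, one_pow], one_pow _]
    · simpa [Finset.prod_mul_distrib, Finset.prod_pi_mulSingle'] using hcd
  · calc tGL d e r ^ i * g * (tGL d e r ^ i)⁻¹
        = s * (tGL d e r ^ i * g * (tGL d e r ^ i)⁻¹) * s⁻¹ := by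
          rw [GeneralLinearGroup.scalar_commute, mul_inv_cancel_right]
      _ = s * tGL d e r ^ i * g * (s * tGL d e r ^ i)⁻¹ := by group

lemma exists_root_of_ad_tGL_pow_inner [NeZero r] (hde : d * e ≠ 0) {i : ℕ} {h : GL (Fin r) ℂ}
    (hh : h ∈ Gdeer d e r)
    (hconj : ∀ g ∈ Gdeer d e r, tGL d e r ^ i * g * (tGL d e r ^ i)⁻¹ = h * g * h⁻¹) :
    ∃ c : ℂ, c ^ (d * e) = 1 ∧ (c ^ r * ζ ^ i) ^ d = 1 := by
  have hζ := Complex.isPrimitiveRoot_exp_two_pi_I_div_mul hde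
  set t := tGL d e r ^ i
  set C := finRotateGL r ℂ
  have hC : C ∈ Gdeer d e r :=
    (mem_Gdeer_iff_of_val_eq (fun _ => one_ne_zero) val_finRotateGL).2 ⟨by simp, by simp⟩
  have hx : t⁻¹ * h ∈ Gdeer (d * e) 1 r :=
    mul_mem (inv_mem (pow_mem (tGL_mem_Gdeer_one hde) i)) (Gdeer_le_Gdeer_one hh)
  obtain ⟨τ, f, hf, hxf, hfpow, -⟩ := mem_Gdeer_iff.1 hx
  have hcomm : Commute (t⁻¹ * h) C := by
    calc t⁻¹ * h * C = t⁻¹ * (h * C * h⁻¹) * h := by group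
      _ = t⁻¹ * (t * C * t⁻¹) * h := by rw [hconj C hC]
      _ = C * (t⁻¹ * h) := by group
  have hconst := apply_eq_apply_zero_of_commute_finRotateGL hf hxf hcomm
  refine ⟨f 0, by simpa using hfpow 0, ?_⟩
  have hhv : (h : Matrix (Fin r) (Fin r) ℂ) =
      monomialMatrix τ fun j => (Pi.mulSingle 0 (ζ ^ i) : Fin r → ℂ) (τ j) * f 0 := by
    rw [show h = t * (t⁻¹ * h) by group, Units.val_mul, hxf, val_tGL_pow, monomialMatrix_mul,
      one_mul]
    simp only [hconst]
  have := ((mem_Gdeer_iff_of_val_eq (fun j => mul_ne_zero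
    (Pi.mulSingle_apply_ne_zero (pow_ne_zero _ (hζ.ne_zero hde)) _) (hf 0)) hhv).1 hh).2
  rwa [Finset.prod_mul_distrib, Equiv.prod_comp τ (Pi.mulSingle 0 (ζ ^ i) : Fin r → ℂ),
    Finset.prod_pi_mulSingle', if_pos (Finset.mem_univ _), Finset.prod_const, Finset.card_univ,
    Fintype.card_fin, mul_comm] at this

end tGL

/-- **Lemma 14 (Marin–Michel).** The matrix `t = Diag(ζ_{de},1,…,1)` normalizes
`G = G(de,e,r)`, and the automorphism `Ad tⁱ` of `G` is inner if and only if
`gcd(e,r) ∣ i`; consequently the image of `Ad t` in `Out(G)` has order `gcd(e,r)`. -/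
theorem ad_t_pow_inner_iff
    (d e r : ℕ) (hd : 1 ≤ d) (he : 1 ≤ e) (hr : 1 ≤ r) :
    tGL d e r ∈ Subgroup.normalizer (Gdeer d e r : Set (Matrix.GeneralLinearGroup (Fin r) ℂ)) ∧
    ∀ i : ℕ,
      (∃ h ∈ Gdeer d e r, ∀ g ∈ Gdeer d e r,
          (tGL d e r) ^ i * g * ((tGL d e r) ^ i)⁻¹ = h * g * h⁻¹)
        ↔ Nat.gcd e r ∣ i := by
  have : NeZero r := ⟨by omega⟩
  have hde : d * e ≠ 0 := by positivity
  refine ⟨Gdeer_one_le_normalizer (tGL_mem_Gdeer_one hde), fun i => ?_⟩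
  rw [← (Complex.isPrimitiveRoot_exp_two_pi_I_div_mul hde).exists_pow_mul_pow_eq_one_iff hde]
  constructor
  · rintro ⟨h, hh, hconj⟩
    exact exists_root_of_ad_tGL_pow_inner hde hh hconj
  · rintro ⟨c, hc, hcd⟩
    obtain ⟨h, hh, hconj⟩ := ad_tGL_pow_inner_of_root hde hc hcd
    exact ⟨h, hh, fun g _ => hconj g⟩
end

section
/- Let G be a finite quasi-indecomposable group. Then G admits a direct product decomposition G = Z × Ĝ where Z ⊆ Z(G) and Ĝ is either trivial or a non-abelian indecomposable group; and in any two such decompositions the factors Z, respectively Ĝ, are isomorphic (so the central factor and the non-abelian factor of G are unique up to isomorphism). -/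
/-- Two subgroups give an (internal) direct product decomposition of `H`. -/
def IsInternalDirectProd {H : Type*} [Group H] (A B : Subgroup H) : Prop :=
  (∀ a ∈ A, ∀ b ∈ B, a * b = b * a) ∧ A ⊓ B = ⊥ ∧ A ⊔ B = ⊤

/-- A group is indecomposable if it admits no non-trivial direct product decomposition. -/
def IndecomposableGroup (H : Type*) [Group H] : Prop :=
  ∀ A B : Subgroup H, IsInternalDirectProd A B → A = ⊥ ∨ B = ⊥

/-- A group is quasi-indecomposable if in any direct product decomposition one of the two
factors is central. -/
def QuasiIndecomposable (H : Type*) [Group H] : Prop :=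
  ∀ A B : Subgroup H, IsInternalDirectProd A B →
    A ≤ Subgroup.center H ∨ B ≤ Subgroup.center H

/-- A decomposition `H = Z × Ĥ` with `Z` central and `Ĥ` trivial or indecomposable
non-abelian. -/
def IsCanonicalDecomp {H : Type*} [Group H] (Z Hhat : Subgroup H) : Prop :=
  IsInternalDirectProd Z Hhat ∧ Z ≤ Subgroup.center H ∧
    (Hhat = ⊥ ∨ ((¬ ∀ a ∈ Hhat, ∀ b ∈ Hhat, a * b = b * a) ∧ IndecomposableGroup ↥Hhat))

/-!
Existence: among the decompositions `H = Z × B` with `Z` central choose one with `|B|` minimal.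
If `B` is abelian then so is `H`, and `H = H × 1`. If `B = A' × B'` non-trivially, then
`H = (Z × A') × B' = (Z × B') × A'`, and quasi-indecomposability makes `Z A'` or `Z B'` central,
contradicting minimality. So `B` is trivial or non-abelian indecomposable.

Uniqueness: for canonical decompositions `Z₁ × H₁ = Z₂ × H₂`, the composite of the projections
`H₁ → H₂ → H₁` has the form `h ↦ h c(h)` with `c` central-valued, because the projections only
discard central components. By Fitting's lemma such an endomorphism of a finite non-abelian
indecomposable group is injective. Hence `H₁ ↪ H₂ ↪ H₁`, so the projection `H₁ → H₂` is an
isomorphism; moreover `Z₁ ∩ H₂ = 1`, so `Z₁ → Z₂` is injective, and `|Z₁| = |H|/|H₁| = |Z₂|`.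
-/

open Subgroup

namespace IsInternalDirectProd

variable {H : Type*} [Group H] {A B : Subgroup H}

theorem symm (dp : IsInternalDirectProd A B) : IsInternalDirectProd B A :=
  ⟨fun b hb a ha => (dp.1 a ha b hb).symm, by rw [inf_comm, dp.2.1], by rw [sup_comm, dp.2.2]⟩

theorem bot_top : IsInternalDirectProd (⊥ : Subgroup H) ⊤ :=
  ⟨fun a ha _ _ => by rw [mem_bot.1 ha, one_mul, mul_one], bot_inf_eq _, bot_sup_eq _⟩

noncomputable def mulEquiv (dp : IsInternalDirectProd A B) : A × B ≃* H :=
  MulEquiv.ofBijective (A.subtype.noncommCoprod B.subtype fun a b => dp.1 a a.2 b b.2)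
    ⟨(MonoidHom.noncommCoprod_injective _ _ _).2 ⟨A.subtype_injective, B.subtype_injective,
        by rw [range_subtype, range_subtype, disjoint_iff, dp.2.1]⟩,
      MonoidHom.range_eq_top.1 <| (MonoidHom.noncommCoprod_range _ _ _).trans <| by
        rw [range_subtype, range_subtype, dp.2.2]⟩

theorem mulEquiv_apply (dp : IsInternalDirectProd A B) (p : A × B) :
    dp.mulEquiv p = (p.1 : H) * p.2 :=
  rfl

noncomputable def projLeft (dp : IsInternalDirectProd A B) : H →* A :=
  (MonoidHom.fst A B).comp dp.mulEquiv.symm.toMonoidHom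

noncomputable def projRight (dp : IsInternalDirectProd A B) : H →* B :=
  (MonoidHom.snd A B).comp dp.mulEquiv.symm.toMonoidHom

theorem projLeft_mul_projRight (dp : IsInternalDirectProd A B) (g : H) :
    (dp.projLeft g : H) * dp.projRight g = g :=
  dp.mulEquiv.apply_symm_apply g

theorem projRight_of_mem_left (dp : IsInternalDirectProd A B) (a : A) :
    dp.projRight a = 1 := by
  have : dp.mulEquiv.symm a = (a, 1) := by
    rw [MulEquiv.symm_apply_eq, mulEquiv_apply, OneMemClass.coe_one, mul_one]
  simp [projRight, this]

theorem projRight_of_mem_right (dp : IsInternalDirectProd A B) (b : B) :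
    dp.projRight b = b := by
  have : dp.mulEquiv.symm b = (1, b) := by
    rw [MulEquiv.symm_apply_eq, mulEquiv_apply, OneMemClass.coe_one, one_mul]
  simp [projRight, this]

theorem projRight_mem_center (dp : IsInternalDirectProd A B) {g : H} (hg : g ∈ center H) :
    dp.projRight g ∈ center B := by
  rw [mem_center_iff]
  intro b
  rw [← dp.projRight_of_mem_right b, ← map_mul, ← map_mul, mem_center_iff.1 hg]

theorem card_mul_card (dp : IsInternalDirectProd A B) :
    Nat.card A * Nat.card B = Nat.card H := by
  rw [← Nat.card_prod]
  exact Nat.card_congr dp.mulEquiv.toEquiv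

theorem card_right_lt [Finite H] (dp : IsInternalDirectProd A B) (hA : A ≠ ⊥) :
    Nat.card B < Nat.card H := by
  have hA1 : 1 < Nat.card A := (one_lt_card_iff_ne_bot A).2 hA
  have hB0 : 0 < Nat.card B := Nat.card_pos
  rw [← dp.card_mul_card]
  nlinarith

theorem center_eq_top (dp : IsInternalDirectProd A B) (hA : A ≤ center H)
    (hB : ∀ a ∈ B, ∀ b ∈ B, a * b = b * a) : center H = ⊤ := by
  have hBA : A ⊔ B ≤ centralizer B :=
    sup_le (hA.trans (center_le_centralizer _)) fun b hb =>
      mem_centralizer_iff.2 fun a ha => hB a ha b hb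
  rw [dp.2.2, ← le_centralizer_iff, coe_top, centralizer_univ] at hBA
  exact top_le_iff.1 (dp.2.2 ▸ sup_le hA hBA)

theorem refine_right (dp : IsInternalDirectProd A B) (hA : A ≤ center H)
    {A' B' : Subgroup B} (dp' : IsInternalDirectProd A' B') :
    IsInternalDirectProd (A ⊔ A'.map B.subtype) (B'.map B.subtype) := by
  have hcomm : A ⊔ A'.map B.subtype ≤ centralizer (B'.map B.subtype) := by
    refine sup_le (hA.trans (center_le_centralizer _)) ?_
    rintro _ ⟨a, ha, rfl⟩
    rw [mem_centralizer_iff]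
    rintro _ ⟨b, hb, rfl⟩
    exact congrArg Subtype.val (dp'.1 a ha b hb).symm
  have hproj : (A ⊔ A'.map B.subtype).map dp.projRight ≤ A' := by
    rw [map_le_iff_le_comap]
    refine sup_le (fun a ha => ?_) ?_
    · rw [mem_comap, dp.projRight_of_mem_left ⟨a, ha⟩]
      exact one_mem _
    · rintro _ ⟨a, ha, rfl⟩
      rwa [mem_comap, Subgroup.coe_subtype, dp.projRight_of_mem_right]
  refine ⟨fun a ha b hb => (mem_centralizer_iff.1 (le_centralizer_iff.1 hcomm hb) a ha), ?_, ?_⟩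
  · rw [eq_bot_iff_forall]
    rintro _ ⟨hx, b, hb, rfl⟩
    have hb' : b ∈ A' ⊓ B' := ⟨dp.projRight_of_mem_right b ▸ hproj (mem_map_of_mem _ hx), hb⟩
    rw [dp'.2.1, mem_bot] at hb'
    rw [hb', map_one]
  · rw [sup_assoc, ← Subgroup.map_sup, dp'.2.2, ← MonoidHom.range_eq_map, range_subtype, dp.2.2]

end IsInternalDirectProd

section Existence

variable {H : Type*} [Group H] [Finite H]

theorem IsInternalDirectProd.isCanonicalDecomp_or_exists_card_lt (hq : QuasiIndecomposable H)
    {Z B : Subgroup H} (dp : IsInternalDirectProd Z B) (hZ : Z ≤ center H) :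
    IsCanonicalDecomp Z B ∨ ∃ Z' B' : Subgroup H,
      IsInternalDirectProd Z' B' ∧ Z' ≤ center H ∧ Nat.card B' < Nat.card B := by
  by_cases hB : B = ⊥
  · exact .inl ⟨dp, hZ, .inl hB⟩
  by_cases hcomm : ∀ a ∈ B, ∀ b ∈ B, a * b = b * a
  · refine .inr ⟨⊤, ⊥, IsInternalDirectProd.bot_top.symm, (dp.center_eq_top hZ hcomm).ge, ?_⟩
    rwa [card_bot, one_lt_card_iff_ne_bot]
  by_cases hind : IndecomposableGroup B
  · exact .inl ⟨dp, hZ, .inr ⟨hcomm, hind⟩⟩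
  obtain ⟨A', B', dp', hA', hB'⟩ :
      ∃ A' B' : Subgroup B, IsInternalDirectProd A' B' ∧ A' ≠ ⊥ ∧ B' ≠ ⊥ := by
    simpa [IndecomposableGroup] using hind
  refine .inr ?_
  rcases hq _ _ (dp.refine_right hZ dp') with h | h
  · refine ⟨_, _, dp.refine_right hZ dp', h, ?_⟩
    rw [card_map_of_injective B.subtype_injective]
    exact dp'.card_right_lt hA'
  · refine ⟨_, _, dp.refine_right hZ dp'.symm, sup_le hZ h, ?_⟩
    rw [card_map_of_injective B.subtype_injective]
    exact dp'.symm.card_right_lt hB'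

theorem exists_isCanonicalDecomp (hq : QuasiIndecomposable H) :
    ∃ Z B : Subgroup H, IsCanonicalDecomp Z B := by
  obtain ⟨⟨Z, B⟩, ⟨dp, hZ⟩, hmin⟩ :=
    (measure fun p : Subgroup H × Subgroup H => Nat.card p.2).wf.has_min
      {p | IsInternalDirectProd p.1 p.2 ∧ p.1 ≤ center H}
      ⟨(⊥, ⊤), IsInternalDirectProd.bot_top, bot_le⟩
  rcases dp.isCanonicalDecomp_or_exists_card_lt hq hZ with h | ⟨Z', B', dp', hZ', hlt⟩
  · exact ⟨Z, B, h⟩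
  · exact absurd hlt (hmin (Z', B') ⟨dp', hZ'⟩)

end Existence

theorem exists_pos_isIdempotentElem_pow {M : Type*} [Monoid M] [Finite M] (a : M) :
    ∃ n, 0 < n ∧ IsIdempotentElem (a ^ n) := by
  obtain ⟨i, j, hij, h⟩ := Finite.exists_ne_map_eq_of_infinite (a ^ · : ℕ → M)
  wlog hlt : i < j generalizing i j
  · exact this j i hij.symm h.symm (hij.lt_or_gt.resolve_left hlt)
  have hstep : ∀ m ≥ i, a ^ (m + (j - i)) = a ^ m := fun m hm => by
    rw [show m + (j - i) = (m - i) + j by omega, pow_add, ← h, ← pow_add, Nat.sub_add_cancel hm]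
  have hper : ∀ q m, i ≤ m → a ^ (m + q * (j - i)) = a ^ m := by
    intro q
    induction q with
    | zero => simp
    | succ q ih =>
      intro m hm
      rw [add_mul, one_mul, ← add_assoc, hstep _ (hm.trans (Nat.le_add_right _ _)), ih m hm]
  -- a multiple of the period `j - i` beyond the preperiod `i`
  have hn : i < (i + 1) * (j - i) := by nlinarith [Nat.sub_pos_of_lt hlt]
  refine ⟨(i + 1) * (j - i), by omega, ?_⟩
  rw [IsIdempotentElem, ← pow_add, hper _ _ hn.le]

section Fitting

variable {G : Type*} [Group G]

theorem isInternalDirectProd_ker_range {e : G →* G} (hee : ∀ g, e (e g) = e g)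
    (hconj : ∀ g x, e (g * x * g⁻¹) = g * e x * g⁻¹) :
    IsInternalDirectProd e.ker e.range := by
  have hrange : e.range.Normal := ⟨by
    rintro _ ⟨x, rfl⟩ g
    exact ⟨g * x * g⁻¹, hconj g x⟩⟩
  have hinf : e.ker ⊓ e.range = ⊥ := by
    rw [eq_bot_iff_forall]
    rintro _ ⟨hx, y, rfl⟩
    rw [← hee y]
    exact hx
  refine ⟨fun a ha b hb => commute_of_normal_of_disjoint _ _ inferInstance hrange
    (disjoint_iff.2 hinf) a b ha hb, hinf, eq_top_iff.2 fun g _ => ?_⟩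
  have hker : g * (e g)⁻¹ ∈ e.ker := by
    rw [MonoidHom.mem_ker, map_mul, map_inv, hee, mul_inv_cancel]
  rw [← inv_mul_cancel_right g (e g)]
  exact mul_mem (mem_sup_left hker) (mem_sup_right ⟨g, rfl⟩)

theorem map_conj_of_mul_inv_mem_center {φ : Monoid.End G} (hφ : ∀ g, φ g * g⁻¹ ∈ center G)
    (g x : G) : φ (g * x * g⁻¹) = g * φ x * g⁻¹ := by
  have hφg : φ g = (φ g * g⁻¹) * g := (inv_mul_cancel_right _ _).symm
  rw [map_mul, map_mul, map_inv, hφg, mul_inv_rev, ← mul_assoc, mul_assoc _ g,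
    mul_assoc _ (g * φ x), ← mem_center_iff.1 (hφ g), mul_inv_cancel_right]

theorem pow_apply_mul_inv_mem_center {θ : Monoid.End G} (hθ : ∀ g, θ g * g⁻¹ ∈ center G)
    (n : ℕ) (g : G) : (θ ^ n) g * g⁻¹ ∈ center G := by
  induction n with
  | zero => simp
  | succ n ih =>
    rw [pow_succ', Monoid.End.coe_mul, Function.comp_apply]
    simpa only [mul_assoc, inv_mul_cancel_left] using mul_mem (hθ ((θ ^ n) g)) ih

/-- Fitting's lemma for a central shift `θ`: some idempotent power `θ ^ n` splits `G` as
`ker (θ ^ n) × range (θ ^ n)`, and `range (θ ^ n) = ⊥` would make `G` abelian. -/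
theorem IndecomposableGroup.injective_of_mul_inv_mem_center [Finite G]
    (hG : IndecomposableGroup G) (hnc : ¬ ∀ a b : G, a * b = b * a) {θ : Monoid.End G}
    (hθ : ∀ g, θ g * g⁻¹ ∈ center G) : Function.Injective θ := by
  have : Finite (Monoid.End G) := Finite.of_injective _ DFunLike.coe_injective
  obtain ⟨n, hn, he⟩ := exists_pos_isIdempotentElem_pow θ
  have hθn := pow_apply_mul_inv_mem_center hθ n
  rcases hG _ _ (isInternalDirectProd_ker_range (e := θ ^ n) (DFunLike.congr_fun he)
      (map_conj_of_mul_inv_mem_center hθn))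
    with hker | hrange
  · have hinj : Function.Injective (θ ^ n) := (MonoidHom.ker_eq_bot_iff _).1 hker
    rw [Monoid.End.coe_pow, ← Nat.sub_add_cancel hn, Function.iterate_succ] at hinj
    exact hinj.of_comp
  · refine absurd (fun a b => ?_) hnc
    have hb : (θ ^ n) b = 1 := by
      rw [← mem_bot, ← hrange]
      exact ⟨b, rfl⟩
    have hcen := hθn b
    rw [hb, one_mul, inv_mem_iff] at hcen
    exact mem_center_iff.1 hcen a

end Fitting

section Uniqueness

variable {H : Type*} [Group H] {Z₁ H₁ Z₂ H₂ : Subgroup H}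

theorem IsInternalDirectProd.projRight_projRight_mul_inv_mem_center
    (dp₁ : IsInternalDirectProd Z₁ H₁) (dp₂ : IsInternalDirectProd Z₂ H₂)
    (hZ₂ : Z₂ ≤ center H) (h : H₁) :
    dp₁.projRight (dp₂.projRight h) * h⁻¹ ∈ center H₁ := by
  have hsplit : (dp₂.projRight h : H) = (dp₂.projLeft h : H)⁻¹ * h :=
    eq_inv_mul_of_mul_eq (dp₂.projLeft_mul_projRight h)
  rw [hsplit, map_mul, map_inv, dp₁.projRight_of_mem_right h, mul_inv_cancel_right]
  exact inv_mem (dp₁.projRight_mem_center (hZ₂ (dp₂.projLeft h).2))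

theorem IsCanonicalDecomp.injective_projRight_comp_subtype [Finite H]
    (c₁ : IsCanonicalDecomp Z₁ H₁) (dp₂ : IsInternalDirectProd Z₂ H₂) (hZ₂ : Z₂ ≤ center H) :
    Function.Injective (dp₂.projRight.comp H₁.subtype) := by
  obtain ⟨dp₁, -, hH₁ | ⟨hnc, hind⟩⟩ := c₁
  · subst hH₁
    exact Function.injective_of_subsingleton _
  · let θ : Monoid.End H₁ :=
      dp₁.projRight.comp (H₂.subtype.comp (dp₂.projRight.comp H₁.subtype))
    have hθ : Function.Injective θ := hind.injective_of_mul_inv_mem_center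
      (fun hc => hnc fun a ha b hb => congrArg Subtype.val (hc ⟨a, ha⟩ ⟨b, hb⟩))
      (dp₁.projRight_projRight_mul_inv_mem_center dp₂ hZ₂)
    exact Function.Injective.of_comp (f := dp₁.projRight.comp H₂.subtype) hθ

theorem IsCanonicalDecomp.nonempty_mulEquiv [Finite H]
    (c₁ : IsCanonicalDecomp Z₁ H₁) (c₂ : IsCanonicalDecomp Z₂ H₂) :
    Nonempty (Z₁ ≃* Z₂) ∧ Nonempty (H₁ ≃* H₂) := by
  have inj₁₂ := c₁.injective_projRight_comp_subtype c₂.1 c₂.2.1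
  have inj₂₁ := c₂.injective_projRight_comp_subtype c₁.1 c₁.2.1
  have hcardH : Nat.card H₁ = Nat.card H₂ :=
    le_antisymm (Nat.card_le_card_of_injective _ inj₁₂) (Nat.card_le_card_of_injective _ inj₂₁)
  have hcardZ : Nat.card Z₁ = Nat.card Z₂ := Nat.eq_of_mul_eq_mul_right Nat.card_pos <| by
    rw [c₁.1.card_mul_card, hcardH, c₂.1.card_mul_card]
  -- `Z₁ ⊓ H₂` lies in the kernel of the injective map `H₂ → H₁`
  have injZ : Function.Injective (c₂.1.projLeft.comp Z₁.subtype) := by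
    rw [injective_iff_map_eq_one]
    intro z hz
    replace hz : c₂.1.projLeft z = 1 := hz
    have hzw : (c₂.1.projRight z : H) = z := by
      simpa [hz] using c₂.1.projLeft_mul_projRight z
    have hw : c₂.1.projRight z = 1 := (injective_iff_map_eq_one _).1 inj₂₁ _ <| by
      rw [MonoidHom.comp_apply, Subgroup.coe_subtype, hzw, c₁.1.projRight_of_mem_left]
    exact Subtype.ext (by rw [← hzw, hw, OneMemClass.coe_one, OneMemClass.coe_one])
  exact ⟨⟨MulEquiv.ofBijective _ ((Nat.bijective_iff_injective_and_card _).2 ⟨injZ, hcardZ⟩)⟩,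
    ⟨MulEquiv.ofBijective _ ((Nat.bijective_iff_injective_and_card _).2 ⟨inj₁₂, hcardH⟩)⟩⟩

end Uniqueness

/-- **Proposition 16 (Marin–Michel).** A finite quasi-indecomposable group `H` admits a
decomposition `H = Z × Ĥ` with `Z ⊆ Z(H)` and `Ĥ` trivial or indecomposable non-abelian;
in any two such decompositions the central factors are isomorphic and the non-abelian
factors are isomorphic. -/
theorem quasi_indecomposable_canonical_decomposition
    (H : Type) [Group H] [Finite H] (hq : QuasiIndecomposable H) :
    (∃ Z Hhat : Subgroup H, IsCanonicalDecomp Z Hhat) ∧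
    (∀ Z₁ Hhat₁ Z₂ Hhat₂ : Subgroup H,
      IsCanonicalDecomp Z₁ Hhat₁ → IsCanonicalDecomp Z₂ Hhat₂ →
      Nonempty (↥Z₁ ≃* ↥Z₂) ∧ Nonempty (↥Hhat₁ ≃* ↥Hhat₂)) :=
  ⟨exists_isCanonicalDecomp hq, fun _ _ _ _ c₁ c₂ => c₁.nonempty_mulEquiv c₂⟩
end

section
/- Let K/K_0 be a finite Galois extension of number fields with Galois group Γ, and let E = E_0 ⊗_{K_0} K be a K_0-form of a finite-dimensional K-vector space E, so that Γ acts on GL(E) and PGL(E). If #Γ is prime to dim E, then H^1(Γ, PGL(E)) = 0: every map γ ↦ A_γ from Γ to PGL(E) satisfying the cocycle condition A_{στ} = A_σ · σ(A_τ) is a coboundary, i.e. there exists a ∈ PGL(E) with A_γ = a^{−1} γ(a) for all γ ∈ Γ. -/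
/-!
The scalars `c(σ, τ)` by which the cocycle condition fails in `GL(E)` form a 2-cocycle of `Γ` in
`Kˣ`. Its `n`-th power is the coboundary of `σ ↦ (det A_σ)⁻¹` and its `#Γ`-th power that of
`σ ↦ ∏_τ c(σ, τ)`, so by Bézout it is itself a coboundary. Rescaling the `A_σ` accordingly gives
a genuine cocycle in `GL(E)`, which is trivial by Hilbert 90 for `GL_n` (Speiser): the twisted
averages `x ↦ ∑_σ A_σ σ(x)` are fixed by the twisted action, and by Dedekind's independence of
characters they span `Kⁿ`.
-/

section GaloisCohomology

variable {K₀ K : Type*} [Field K₀] [Field K] [Algebra K₀ K] {n : ℕ}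

/-- The entrywise action of a Galois automorphism `γ ∈ Gal(K/K₀)` on `GL_n(K)`
(through the standard `K₀`-form of `Kⁿ`). -/
def galGL (γ : K ≃ₐ[K₀] K) :
    Matrix.GeneralLinearGroup (Fin n) K →* Matrix.GeneralLinearGroup (Fin n) K :=
  Units.map (RingHom.mapMatrix (γ : K →+* K)).toMonoidHom

/-- The scalar matrix `c·1` as an element of `GL_n(K)`. -/
def scalarGL (c : Kˣ) : Matrix.GeneralLinearGroup (Fin n) K :=
  Units.map (algebraMap K (Matrix (Fin n) (Fin n) K)).toMonoidHom c

end GaloisCohomology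

open scoped Matrix

namespace groupCohomology

variable {G M : Type*} [Group G] [CommGroup M] [MulDistribMulAction G M]

theorem IsMulCoboundary₂.mul {f f' : G × G → M} (hf : IsMulCoboundary₂ f)
    (hf' : IsMulCoboundary₂ f') : IsMulCoboundary₂ (f * f') := by
  obtain ⟨x, hx⟩ := hf
  obtain ⟨y, hy⟩ := hf'
  refine ⟨x * y, fun g h => ?_⟩
  simp only [Pi.mul_apply, ← hx, ← hy, smul_mul', mul_div_mul_comm, mul_mul_mul_comm]

theorem IsMulCoboundary₂.zpow {f : G × G → M} (hf : IsMulCoboundary₂ f) (k : ℤ) :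
    IsMulCoboundary₂ (f ^ k) := by
  obtain ⟨x, hx⟩ := hf
  refine ⟨x ^ k, fun g h => ?_⟩
  simp only [Pi.pow_apply, ← hx, smul_zpow', div_zpow, mul_zpow]

theorem IsMulCoboundary₂.of_coprime {f : G × G → M} {m n : ℕ} (hmn : m.Coprime n)
    (hm : IsMulCoboundary₂ (f ^ m)) (hn : IsMulCoboundary₂ (f ^ n)) : IsMulCoboundary₂ f := by
  have hbezout : f = (f ^ m) ^ m.gcdA n * (f ^ n) ^ m.gcdB n := by
    rw [← zpow_natCast, ← zpow_natCast f n, ← zpow_mul, ← zpow_mul, ← zpow_add,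
      ← Nat.gcd_eq_gcd_ab, hmn.gcd_eq_one, Nat.cast_one, zpow_one]
  rw [hbezout]
  exact (hm.zpow _).mul (hn.zpow _)

theorem IsMulCocycle₂.isMulCoboundary₂_pow_card [Fintype G] {f : G × G → M}
    (hf : IsMulCocycle₂ f) : IsMulCoboundary₂ (f ^ Nat.card G) := by
  refine ⟨fun g => ∏ j, f (g, j), fun g h => ?_⟩
  have hprod : (∏ j, f (g * h, j)) * f (g, h) ^ Nat.card G
      = g • (∏ j, f (h, j)) * ∏ j, f (g, j) := by
    rw [Nat.card_eq_fintype_card, ← Finset.card_univ, ← Finset.prod_const,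
      ← Finset.prod_mul_distrib, Finset.prod_congr rfl fun j _ => hf g h j,
      Finset.prod_mul_distrib, Finset.smul_prod',
      Fintype.prod_equiv (Equiv.mulLeft h) (fun j => f (g, h * j)) (fun j => f (g, j))
        fun _ => rfl]
  rw [Pi.pow_apply, ← mul_right_inj (∏ j, f (g * h, j)), hprod]
  beta_reduce
  rw [div_mul_eq_mul_div, mul_div_cancel]

end groupCohomology

section GaloisActionOnGL

variable {K₀ K : Type*} [Field K₀] [Field K] [Algebra K₀ K] {n : ℕ}

@[simp]
theorem coe_galGL (γ : K ≃ₐ[K₀] K) (M : GL (Fin n) K) :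
    (galGL γ M : Matrix (Fin n) (Fin n) K) = (M : Matrix (Fin n) (Fin n) K).map γ :=
  rfl

@[simp]
theorem coe_scalarGL (c : Kˣ) :
    ((scalarGL c : GL (Fin n) K) : Matrix (Fin n) (Fin n) K) =
      (c : K) • (1 : Matrix (Fin n) (Fin n) K) :=
  Algebra.algebraMap_eq_smul_one (c : K)

theorem galGL_one (M : GL (Fin n) K) : galGL (1 : K ≃ₐ[K₀] K) M = M := by
  ext
  simp

theorem galGL_mul (σ τ : K ≃ₐ[K₀] K) (M : GL (Fin n) K) :
    galGL (σ * τ) M = galGL σ (galGL τ M) := by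
  ext
  simp

theorem scalarGL_mul (c d : Kˣ) : (scalarGL (c * d) : GL (Fin n) K) = scalarGL c * scalarGL d :=
  map_mul _ c d

theorem scalarGL_inv (c : Kˣ) : (scalarGL c⁻¹ : GL (Fin n) K) = (scalarGL c)⁻¹ :=
  map_inv _ c

theorem commute_scalarGL (c : Kˣ) (M : GL (Fin n) K) : Commute (scalarGL c) M := by
  ext : 1
  simp

theorem galGL_scalarGL (γ : K ≃ₐ[K₀] K) (c : Kˣ) :
    galGL γ (scalarGL c : GL (Fin n) K) = scalarGL (γ • c) := by
  ext i j
  simp [Matrix.one_apply, apply_ite γ]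

theorem scalarGL_injective (hn : n ≠ 0) :
    Function.Injective (scalarGL : Kˣ → GL (Fin n) K) := fun c d h => by
  have := congr_arg
    (fun M : GL (Fin n) K => (M : Matrix (Fin n) (Fin n) K) ⟨0, by omega⟩ ⟨0, by omega⟩) h
  ext
  simpa using this

theorem det_scalarGL (c : Kˣ) : (scalarGL c : GL (Fin n) K).det = c ^ n := by
  ext
  simp

theorem det_galGL (γ : K ≃ₐ[K₀] K) (M : GL (Fin n) K) : (galGL γ M).det = γ • M.det := by
  ext
  exact (RingHom.map_det (γ : K →+* K) (M : Matrix (Fin n) (Fin n) K)).symm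

end GaloisActionOnGL

section Hilbert90

variable {K₀ K : Type*} [Field K₀] [Field K] [Algebra K₀ K]

theorem linearIndependent_algEquiv_coeFn :
    LinearIndependent K fun σ : K ≃ₐ[K₀] K => (σ : K → K) :=
  (linearIndependent_monoidHom K K).comp (fun σ : K ≃ₐ[K₀] K => (σ : K →* K))
    fun _ _ h => AlgEquiv.ext fun k => DFunLike.congr_fun h k

theorem AlgEquiv.smul_mulVec {n : Type*} [Fintype n] (σ : K ≃ₐ[K₀] K)
    (M : Matrix n n K) (v : n → K) : σ • (M *ᵥ v) = M.map σ *ᵥ (σ • v) :=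
  funext (RingHom.map_mulVec (σ : K →+* K) M v)

theorem exists_isUnit_col_mem_of_span_eq_top {ι : Type*} [Fintype ι] [DecidableEq ι]
    {S : Set (ι → K)} (hS : Submodule.span K S = ⊤) :
    ∃ M : Matrix ι ι K, IsUnit M ∧ ∀ j, M.col j ∈ S := by
  let b := Module.Basis.ofSpan hS.ge
  let b' := b.reindex (b.indexEquiv (Pi.basisFun K ι))
  refine ⟨(Matrix.of b')ᵀ, Matrix.linearIndependent_cols_iff_isUnit.mp b'.linearIndependent,
    fun j => Module.Basis.ofSpan_subset hS.ge ⟨(b.indexEquiv (Pi.basisFun K ι)).symm j, ?_⟩⟩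
  simp [b', b]

variable {n : ℕ} {B : (K ≃ₐ[K₀] K) → GL (Fin n) K}

def IsGLCocycle (B : (K ≃ₐ[K₀] K) → GL (Fin n) K) : Prop :=
  ∀ σ τ, B (σ * τ) = B σ * galGL σ (B τ)

theorem IsGLCocycle.map_one (hB : IsGLCocycle B) : B 1 = 1 := by
  simpa [galGL_one] using hB 1 1

variable [Fintype (K ≃ₐ[K₀] K)]

def twistedSum (B : (K ≃ₐ[K₀] K) → GL (Fin n) K) (x : Fin n → K) : Fin n → K :=
  ∑ σ, (B σ : Matrix (Fin n) (Fin n) K) *ᵥ (σ • x)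

theorem twistedSum_smul (k : K) (x : Fin n → K) :
    twistedSum B (k • x) = ∑ σ, σ k • (B σ : Matrix (Fin n) (Fin n) K) *ᵥ (σ • x) := by
  have hσ : ∀ σ : K ≃ₐ[K₀] K, σ • (k • x) = σ k • σ • x := fun σ => by
    ext i
    simp [smul_mul']
  simp only [twistedSum, hσ, Matrix.mulVec_smul]

theorem IsGLCocycle.mulVec_smul_twistedSum (hB : IsGLCocycle B) (τ : K ≃ₐ[K₀] K)
    (x : Fin n → K) :
    (B τ : Matrix (Fin n) (Fin n) K) *ᵥ (τ • twistedSum B x) = twistedSum B x := by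
  have hterm : ∀ σ, (B τ : Matrix (Fin n) (Fin n) K) *ᵥ
        (τ • ((B σ : Matrix (Fin n) (Fin n) K) *ᵥ (σ • x)))
      = (B (τ * σ) : Matrix (Fin n) (Fin n) K) *ᵥ ((τ * σ) • x) := fun σ => by
    rw [AlgEquiv.smul_mulVec, Matrix.mulVec_mulVec, smul_smul, hB, Units.val_mul, coe_galGL]
  simp only [twistedSum, Finset.smul_sum, Matrix.mulVec_sum, hterm]
  exact Fintype.sum_equiv (Equiv.mulLeft τ) _ _ fun _ => rfl

theorem IsGLCocycle.span_range_twistedSum (hB : IsGLCocycle B) :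
    Submodule.span K (Set.range (twistedSum B)) = ⊤ := by
  rw [← Submodule.dualAnnihilator_eq_bot_iff, Submodule.eq_bot_iff]
  intro φ hφ
  rw [Submodule.mem_dualAnnihilator] at hφ
  refine LinearMap.ext fun x => ?_
  have hrel : ∑ σ, φ ((B σ : Matrix (Fin n) (Fin n) K) *ᵥ (σ • x)) • (σ : K → K) = 0 := by
    funext k
    have := hφ _ (Submodule.subset_span ⟨k • x, rfl⟩)
    rw [twistedSum_smul, map_sum] at this
    simpa [mul_comm] using this
  have := Fintype.linearIndependent_iff.mp
    (linearIndependent_algEquiv_coeFn (K₀ := K₀) (K := K)) _ hrel 1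
  rwa [hB.map_one, Units.val_one, one_smul, Matrix.one_mulVec] at this

theorem IsGLCocycle.exists_eq_inv_mul_galGL (hB : IsGLCocycle B) :
    ∃ a : GL (Fin n) K, ∀ γ, B γ = a⁻¹ * galGL γ a := by
  obtain ⟨M, hM, hcol⟩ := exists_isUnit_col_mem_of_span_eq_top hB.span_range_twistedSum
  have hfix : ∀ γ, (B γ : Matrix (Fin n) (Fin n) K) * M.map γ = M := by
    intro γ
    ext i j
    obtain ⟨x, hx⟩ := hcol j
    have := congrFun (hB.mulVec_smul_twistedSum γ x) i
    rw [hx] at this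
    simpa [Matrix.mul_apply, Matrix.mulVec, dotProduct] using this
  refine ⟨hM.unit⁻¹, fun γ => ?_⟩
  rw [inv_inv, map_inv, eq_mul_inv_iff_mul_eq]
  ext : 1
  exact hfix γ

end Hilbert90

section ProjectiveCocycle

open groupCohomology

variable {K₀ K : Type*} [Field K₀] [Field K] [Algebra K₀ K] {n : ℕ}

def IsProjectiveCocycle (A : (K ≃ₐ[K₀] K) → GL (Fin n) K)
    (c : (K ≃ₐ[K₀] K) → (K ≃ₐ[K₀] K) → Kˣ) : Prop :=
  ∀ σ τ, A (σ * τ) = scalarGL (c σ τ) * (A σ * galGL σ (A τ))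

variable {A : (K ≃ₐ[K₀] K) → GL (Fin n) K} {c : (K ≃ₐ[K₀] K) → (K ≃ₐ[K₀] K) → Kˣ}

theorem IsProjectiveCocycle.isMulCocycle₂ (hA : IsProjectiveCocycle A c) (hn : n ≠ 0) :
    IsMulCocycle₂ (Function.uncurry c) := by
  intro σ τ ρ
  apply scalarGL_injective hn
  apply mul_right_cancel (b := A σ * (galGL σ (A τ) * galGL (σ * τ) (A ρ)))
  calc scalarGL (c (σ * τ) ρ * c σ τ) * (A σ * (galGL σ (A τ) * galGL (σ * τ) (A ρ)))
      = A (σ * τ * ρ) := by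
        rw [hA, hA, scalarGL_mul]
        simp only [mul_assoc]
    _ = scalarGL (σ • c τ ρ * c σ (τ * ρ)) * (A σ * (galGL σ (A τ) * galGL (σ * τ) (A ρ))) := by
      rw [mul_assoc σ, hA σ, hA τ, map_mul, map_mul, galGL_scalarGL, galGL_mul,
        (commute_scalarGL _ (A σ)).symm.left_comm, ← mul_assoc, ← scalarGL_mul,
        mul_comm (c σ (τ * ρ))]

theorem IsProjectiveCocycle.isMulCoboundary₂_pow (hA : IsProjectiveCocycle A c) :
    IsMulCoboundary₂ (Function.uncurry c ^ n) := by
  refine ⟨fun γ => (A γ).det⁻¹, fun σ τ => ?_⟩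
  have hdet : (A (σ * τ)).det = c σ τ ^ n * ((A σ).det * σ • (A τ).det) := by
    rw [hA, map_mul, map_mul, det_scalarGL, det_galGL]
  simp only [Pi.pow_apply, Function.uncurry_apply_pair]
  rw [hdet, smul_inv', div_inv_eq_mul, mul_inv_eq_iff_eq_mul, inv_mul_eq_iff_eq_mul]
  ac_rfl

theorem IsProjectiveCocycle.exists_isGLCocycle_scalarGL_mul (hA : IsProjectiveCocycle A c)
    (hc : IsMulCoboundary₂ (Function.uncurry c)) :
    ∃ x : (K ≃ₐ[K₀] K) → Kˣ, IsGLCocycle fun γ => scalarGL (x γ) * A γ := by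
  obtain ⟨x, hx⟩ := hc
  refine ⟨x, fun σ τ => ?_⟩
  have hxc : x (σ * τ) * c σ τ = x σ * σ • x τ := by
    rw [← Function.uncurry_apply_pair c, ← hx, div_mul_eq_mul_div, mul_div_cancel, mul_comm]
  dsimp only
  rw [hA, ← mul_assoc, ← scalarGL_mul, hxc, map_mul, galGL_scalarGL, scalarGL_mul]
  simp only [mul_assoc]
  rw [(commute_scalarGL (σ • x τ) (A σ)).symm.left_comm]

end ProjectiveCocycle

theorem h1_pgl_trivial_of_coprime_general
    (K₀ K : Type) [Field K₀] [Field K]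
    [Algebra K₀ K] [FiniteDimensional K₀ K]
    (n : ℕ)
    (hcop : Nat.Coprime (Nat.card (K ≃ₐ[K₀] K)) n)
    (A : (K ≃ₐ[K₀] K) → Matrix.GeneralLinearGroup (Fin n) K)
    -- cocycle condition in `PGL(E)`:
    (hcoc : ∀ σ τ : K ≃ₐ[K₀] K, ∃ c : Kˣ,
      A (σ * τ) = scalarGL c * (A σ * galGL σ (A τ))) :
    -- coboundary in `PGL(E)`:
    ∃ a : Matrix.GeneralLinearGroup (Fin n) K, ∀ γ : K ≃ₐ[K₀] K, ∃ c : Kˣ,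
      A γ = scalarGL c * (a⁻¹ * galGL γ a) := by
  rcases eq_or_ne n 0 with rfl | hn
  · exact ⟨1, fun _ => ⟨1, Subsingleton.elim _ _⟩⟩
  choose c hc using hcoc
  have hA : IsProjectiveCocycle A c := hc
  have hcob : groupCohomology.IsMulCoboundary₂ (Function.uncurry c) :=
    .of_coprime hcop (hA.isMulCocycle₂ hn).isMulCoboundary₂_pow_card hA.isMulCoboundary₂_pow
  obtain ⟨x, hx⟩ := hA.exists_isGLCocycle_scalarGL_mul hcob
  obtain ⟨a, ha⟩ := hx.exists_eq_inv_mul_galGL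
  exact ⟨a, fun γ => ⟨(x γ)⁻¹, by rw [← ha γ, scalarGL_inv, inv_mul_cancel_left]⟩⟩

/-- **Proposition 19 (Marin–Michel).** Let `K/K₀` be a finite Galois extension of number
fields with group `Γ`, acting on `GL(E)` and `PGL(E)` through a `K₀`-form of the
finite-dimensional `K`-vector space `E = Kⁿ`.  If `#Γ` is prime to `n = dim E`, then
`H¹(Γ, PGL(E)) = 0`: every cocycle `γ ↦ A_γ` with values in `PGL(E)` (written here as a
family in `GL(E)` satisfying the cocycle condition up to scalars) is a coboundary, i.e.
there is `a ∈ GL(E)` with `A_γ = a⁻¹·γ(a)` in `PGL(E)` for all `γ ∈ Γ`. -/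
theorem h1_pgl_trivial_of_coprime
    (K₀ K : Type) [Field K₀] [Field K] [NumberField K₀] [NumberField K]
    [Algebra K₀ K] [IsGalois K₀ K] [FiniteDimensional K₀ K]
    (n : ℕ)
    (hcop : Nat.Coprime (Nat.card (K ≃ₐ[K₀] K)) n)
    (A : (K ≃ₐ[K₀] K) → Matrix.GeneralLinearGroup (Fin n) K)
    -- cocycle condition in `PGL(E)`:
    (hcoc : ∀ σ τ : K ≃ₐ[K₀] K, ∃ c : Kˣ,
      A (σ * τ) = scalarGL c * (A σ * galGL σ (A τ))) :
    -- coboundary in `PGL(E)`: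
    ∃ a : Matrix.GeneralLinearGroup (Fin n) K, ∀ γ : K ≃ₐ[K₀] K, ∃ c : Kˣ,
      A γ = scalarGL c * (a⁻¹ * galGL γ a) :=
  h1_pgl_trivial_of_coprime_general K₀ K n hcop A hcoc
end
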